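/- arXiv:2201.03920 — 2 statements merged into one kernel-verified Lean document; each statement's English description precedes it below -/
import Mathlib

section
/- The subgroup of SL(2,ℤ) generated by the two elements T = [[1,0],[1,1]] (the matrix with rows (1,0),(1,1)) and -1 (the negative identity matrix) is isomorphic, as a group, to ℤ × ℤ/2ℤ. -/
open Matrix

/-- The matrix `T = [[1,0],[1,1]]` as an element of `SL(2,ℤ)`. -/
def T : Matrix.SpecialLinearGroup (Fin 2) ℤ :=
  ⟨!![1, 0; 1, 1], by simp [Matrix.det_fin_two_of]⟩

/-- The negative of the identity matrix as an element of `SL(2,ℤ)`. -/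
def negId : Matrix.SpecialLinearGroup (Fin 2) ℤ :=
  ⟨!![-1, 0; 0, -1], by simp [Matrix.det_fin_two_of]⟩

/-!
Two commuting elements `a`, `b` with `zpowers a ⊓ zpowers b = ⊥` generate the internal direct
product of `zpowers a ≃* ZMod (orderOf a)` and `zpowers b ≃* ZMod (orderOf b)`. Here `T ^ n` has
lower left entry `n`, so `T` has infinite order and its factor is `ZMod 0 = ℤ`; `negId = -1` is
central of order `2`; and every power of `T` has upper left entry `1`, so none of them is `-1`.
-/

open Subgroup

section ZModPowers

variable {G : Type*} [Group G]

noncomputable def zmodPowersHom (g : G) : Multiplicative (ZMod (orderOf g)) →* G :=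
  AddMonoidHom.toMultiplicativeLeft <|
    ZMod.lift _ ⟨zmultiplesHom _ (Additive.ofMul g), by simp [← ofMul_pow, pow_orderOf_eq_one]⟩

@[simp]
lemma zmodPowersHom_ofAdd_intCast (g : G) (k : ℤ) :
    zmodPowersHom g (Multiplicative.ofAdd (k : ZMod (orderOf g))) = g ^ k := by
  simp [zmodPowersHom]

lemma zmodPowersHom_injective (g : G) : Function.Injective (zmodPowersHom g) := by
  refine (injective_iff_map_eq_one _).2 fun x hx ↦ ?_
  obtain ⟨k, hk⟩ := ZMod.intCast_surjective x.toAdd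
  rw [← ofAdd_toAdd x, ← hk, zmodPowersHom_ofAdd_intCast, ← orderOf_dvd_iff_zpow_eq_one,
    ← ZMod.intCast_zmod_eq_zero_iff_dvd] at hx
  rw [← ofAdd_toAdd x, ← hk, hx, ofAdd_zero]

lemma range_zmodPowersHom (g : G) : (zmodPowersHom g).range = zpowers g := by
  ext x
  simp only [MonoidHom.mem_range, mem_zpowers_iff]
  constructor
  · rintro ⟨y, rfl⟩
    obtain ⟨k, hk⟩ := ZMod.intCast_surjective y.toAdd
    exact ⟨k, by rw [← zmodPowersHom_ofAdd_intCast, hk, ofAdd_toAdd]⟩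
  · rintro ⟨k, rfl⟩
    exact ⟨_, zmodPowersHom_ofAdd_intCast g k⟩

end ZModPowers

section ClosurePair

variable {G : Type*} [Group G] {a b : G}

noncomputable def closurePairHom (hab : Commute a b) :
    Multiplicative (ZMod (orderOf a)) × Multiplicative (ZMod (orderOf b)) →* G :=
  (zmodPowersHom a).noncommCoprod (zmodPowersHom b) fun x y ↦ by
    obtain ⟨i, hi⟩ := mem_zpowers_iff.1 ((range_zmodPowersHom a).le ⟨x, rfl⟩)
    obtain ⟨j, hj⟩ := mem_zpowers_iff.1 ((range_zmodPowersHom b).le ⟨y, rfl⟩)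
    rw [← hi, ← hj]
    exact hab.zpow_zpow i j

lemma closurePairHom_injective (hab : Commute a b) (hdisj : Disjoint (zpowers a) (zpowers b)) :
    Function.Injective (closurePairHom hab) :=
  (MonoidHom.noncommCoprod_injective _ _ _).2
    ⟨zmodPowersHom_injective a, zmodPowersHom_injective b, by
      rwa [range_zmodPowersHom, range_zmodPowersHom]⟩

lemma range_closurePairHom (hab : Commute a b) :
    (closurePairHom hab).range = closure {a, b} := by
  rw [closurePairHom, MonoidHom.noncommCoprod_range, range_zmodPowersHom, range_zmodPowersHom,
    zpowers_eq_closure, zpowers_eq_closure, ← Subgroup.closure_union, Set.singleton_union]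

noncomputable def closurePairMulEquiv (hab : Commute a b)
    (hdisj : Disjoint (zpowers a) (zpowers b)) :
    closure {a, b} ≃* Multiplicative (ZMod (orderOf a) × ZMod (orderOf b)) :=
  ((MonoidHom.ofInjective (closurePairHom_injective hab hdisj)).trans
    (MulEquiv.subgroupCongr (range_closurePairHom hab))).symm.trans
    (MulEquiv.prodMultiplicative _ _).symm

end ClosurePair

section LowerUnitriangular

variable {R : Type*} [CommRing R]

def lowerUnitriangularHom : Multiplicative R →* SpecialLinearGroup (Fin 2) R where
  toFun x := ⟨!![1, 0; x.toAdd, 1], by simp [det_fin_two_of]⟩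
  map_one' := Subtype.ext one_fin_two.symm
  map_mul' x y := Subtype.ext <| by
    change _ = !![1, 0; x.toAdd, 1] * !![1, 0; y.toAdd, 1]
    simp

@[simp]
lemma coe_lowerUnitriangularHom (x : Multiplicative R) :
    (lowerUnitriangularHom x : Matrix (Fin 2) (Fin 2) R) = !![1, 0; x.toAdd, 1] :=
  rfl

lemma lowerUnitriangularHom_injective : Function.Injective (lowerUnitriangularHom (R := R)) :=
  fun x y h ↦ by simpa using congr_arg (fun g : SpecialLinearGroup (Fin 2) R ↦ g 1 0) h

end LowerUnitriangular

lemma T_eq_lowerUnitriangularHom : T = lowerUnitriangularHom (Multiplicative.ofAdd 1) :=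
  rfl

lemma T_zpow (n : ℤ) : T ^ n = lowerUnitriangularHom (Multiplicative.ofAdd n) := by
  rw [T_eq_lowerUnitriangularHom, ← map_zpow, ← ofAdd_zsmul, smul_eq_mul, mul_one]

lemma negId_eq_neg_one : negId = -1 := by
  ext i j; fin_cases i <;> fin_cases j <;> rfl

lemma orderOf_T : orderOf T = 0 := by
  rw [T_eq_lowerUnitriangularHom, orderOf_injective _ lowerUnitriangularHom_injective,
    orderOf_eq_zero_iff]
  exact not_isOfFinOrder_of_isMulTorsionFree (by decide)

lemma orderOf_neg_one_SL2Z : orderOf (-1 : SpecialLinearGroup (Fin 2) ℤ) = 2 := by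
  refine orderOf_eq_prime neg_one_sq fun h ↦ ?_
  simpa using congr_arg (fun g : SpecialLinearGroup (Fin 2) ℤ ↦ g 0 0) h

lemma disjoint_zpowers_T_neg_one : Disjoint (zpowers T) (zpowers (-1)) := by
  refine disjoint_def.2 fun {x} hT hneg ↦ ?_
  obtain ⟨k, rfl⟩ := mem_zpowers_iff.1 hneg
  rw [neg_one_zpow_eq_ite] at hT ⊢
  split_ifs at hT ⊢
  · rfl
  · obtain ⟨n, hn⟩ := mem_zpowers_iff.1 hT
    rw [T_zpow] at hn
    simpa using congr_arg (fun g : SpecialLinearGroup (Fin 2) ℤ ↦ g 0 0) hn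

/-- The subgroup of `SL(2,ℤ)` generated by `T = [[1,0],[1,1]]` and the negative identity
matrix is isomorphic, as a group, to `ℤ × ℤ/2ℤ`. -/
theorem stmt1 :
    Nonempty (↥(Subgroup.closure {T, negId}) ≃* Multiplicative (ℤ × ZMod 2)) := by
  have e := closurePairMulEquiv (Commute.neg_one_right T) disjoint_zpowers_T_neg_one
  rw [orderOf_T, orderOf_neg_one_SL2Z, ← negId_eq_neg_one] at e
  exact ⟨e⟩
end

section
/- The formula (x,ε)·(s,n) := ((-1)^ε s + n•x, n), for (x,ε) ∈ P = S¹ ⋊ ℤ/2 and (s,n) ∈ A = S¹ × ℤ, defines an action of P on A by group automorphisms (i.e. a group homomorphism P → Aut(A)); moreover the resulting semidirect product H = A ⋊ P = (S¹ × ℤ) ⋊ (S¹ ⋊ ℤ/2) is isomorphic as a group to the semidirect product (ℝ/ℤ)² ⋊ (ℤ × ℤ/2ℤ), where (n,ε) ∈ ℤ × ℤ/2ℤ acts on the torus (ℝ/ℤ)² via the matrix [[1,0],[n,1]]·(-1)^ε, i.e. by (a,b) ↦ ((-1)^ε a, (-1)^ε (n•a + b)). -/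
/-- The additive circle `S¹ = ℝ/ℤ`, written multiplicatively. -/
abbrev S1 : Type := Multiplicative (AddCircle (1 : ℝ))

/-!
Written additively, `((s, n), (x, ε)) ↦ ((x, s - n • x), (-n, ε))` is the isomorphism: the two
circle coordinates `x` and `s` of `H` span a normal torus with complement `{(n, ε)}`, and
conjugation by `(n, ε)` shears and reflects that torus exactly as the matrix `(-1)^ε [[1,0],[-n,1]]`
does. Multiplicativity then reduces to an identity of integer linear combinations in an abelian
group.
-/

open Multiplicative

lemma zpow_units_zpow_self {G : Type*} [Group G] (a : G) (u : ℤˣ) : (a ^ (u : ℤ)) ^ (u : ℤ) = a := by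
  rw [← zpow_mul, ← Units.val_mul, Int.units_mul_self, Units.val_one, zpow_one]

section CommGroup

variable (A : Type*) [CommGroup A]

def zpowUnitsHom : ℤˣ →* MulAut A where
  toFun u :=
    { zpowGroupHom (u : ℤ) with
      invFun := (· ^ (u : ℤ))
      left_inv a := zpow_units_zpow_self a u
      right_inv a := zpow_units_zpow_self a u }
  map_one' := by ext; simp
  map_mul' u v := by ext a; simp [MulAut.mul_apply, ← zpow_mul, mul_comm]

@[simp] lemma zpowUnitsHom_apply (u : ℤˣ) (a : A) : zpowUnitsHom A u a = a ^ (u : ℤ) := rfl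

def shearHom : A →* MulAut (A × Multiplicative ℤ) where
  toFun x :=
    { toFun p := (p.1 * x ^ toAdd p.2, p.2)
      invFun p := (p.1 / x ^ toAdd p.2, p.2)
      left_inv p := by simp
      right_inv p := by simp
      map_mul' p q := by ext <;> simp [zpow_add, mul_mul_mul_comm] }
  map_one' := by ext <;> simp
  map_mul' x y := by ext <;> simp [MulAut.mul_apply, mul_zpow, mul_right_comm, mul_assoc]

@[simp] lemma shearHom_apply (x : A) (p : A × Multiplicative ℤ) :
    shearHom A x p = (p.1 * x ^ toAdd p.2, p.2) := rfl

def reflectFstHom : ℤˣ →* MulAut (A × Multiplicative ℤ) where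
  toFun u :=
    { toFun p := (p.1 ^ (u : ℤ), p.2)
      invFun p := (p.1 ^ (u : ℤ), p.2)
      left_inv p := by simp [zpow_units_zpow_self]
      right_inv p := by simp [zpow_units_zpow_self]
      map_mul' p q := by ext <;> simp [mul_zpow] }
  map_one' := by ext <;> simp
  map_mul' u v := by ext <;> simp [MulAut.mul_apply, ← zpow_mul, mul_comm]

@[simp] lemma reflectFstHom_apply (u : ℤˣ) (p : A × Multiplicative ℤ) :
    reflectFstHom A u p = (p.1 ^ (u : ℤ), p.2) := rfl

@[simp] lemma reflectFstHom_symm (u : ℤˣ) : (reflectFstHom A u).symm = reflectFstHom A u := rfl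

lemma conj_reflectFstHom_shearHom (u : ℤˣ) (x : A) :
    MulAut.conj (reflectFstHom A u) (shearHom A x) = shearHom A (x ^ (u : ℤ)) := by
  ext p <;> simp only [MulAut.conj_apply, MulAut.mul_apply, MulAut.inv_apply, reflectFstHom_symm,
    shearHom_apply, reflectFstHom_apply]
  rw [mul_zpow, zpow_units_zpow_self, ← zpow_mul, ← zpow_mul, mul_comm (toAdd p.2)]

def torusShearHom : Multiplicative ℤ →* MulAut (A × A) where
  toFun n :=
    { toFun p := (p.1, p.1 ^ toAdd n * p.2)
      invFun p := (p.1, p.2 / p.1 ^ toAdd n)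
      left_inv p := by simp
      right_inv p := by simp
      map_mul' p q := by ext <;> simp [mul_zpow, mul_mul_mul_comm] }
  map_one' := by ext <;> simp
  map_mul' n m := by ext <;> simp [MulAut.mul_apply, zpow_add, mul_assoc]

@[simp] lemma torusShearHom_apply (n : Multiplicative ℤ) (p : A × A) :
    torusShearHom A n p = (p.1, p.1 ^ toAdd n * p.2) := rfl

lemma commute_torusShearHom_zpowUnitsHom (n : Multiplicative ℤ) (u : ℤˣ) :
    Commute (torusShearHom A n) (zpowUnitsHom (A × A) u) := by
  ext p <;> simp [MulAut.mul_apply, mul_zpow, ← zpow_mul, mul_comm]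

end CommGroup

section Actions

variable {A : Type*} [CommGroup A] {G : Type*} [Group G] (σ : G →* ℤˣ)

/-- `(x, g)` acts on the column `(s, n)` through the matrix `[[σ g, x], [0, 1]]`. -/
def affineAction : A ⋊[(zpowUnitsHom A).comp σ] G →* MulAut (A × Multiplicative ℤ) :=
  SemidirectProduct.lift (shearHom A) ((reflectFstHom A).comp σ) fun g => by
    ext x : 1
    exact (conj_reflectFstHom_shearHom A (σ g) x).symm

lemma affineAction_apply (x : A) (g : G) (s : A) (n : Multiplicative ℤ) :
    affineAction σ ⟨x, g⟩ (s, n) = (s ^ (σ g : ℤ) * x ^ toAdd n, n) := rfl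

def torusAction : Multiplicative ℤ × G →* MulAut (A × A) :=
  (torusShearHom A).noncommCoprod ((zpowUnitsHom (A × A)).comp σ) fun n g =>
    commute_torusShearHom_zpowUnitsHom A n (σ g)

lemma torusAction_apply (n : Multiplicative ℤ) (g : G) (a b : A) :
    torusAction σ (n, g) (a, b) = (a ^ (σ g : ℤ), (a ^ toAdd n * b) ^ (σ g : ℤ)) := by
  simp [torusAction, MulAut.mul_apply, mul_zpow, ← zpow_mul, mul_comm]

lemma affineAction_mul_mk (s t x y : A) (n m : Multiplicative ℤ) (g g' : G) :
    (⟨(s, n), ⟨x, g⟩⟩ * ⟨(t, m), ⟨y, g'⟩⟩ :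
        (A × Multiplicative ℤ) ⋊[affineAction σ] (A ⋊[(zpowUnitsHom A).comp σ] G)) =
      ⟨(s * t ^ (σ g : ℤ) * x ^ toAdd m, n * m), ⟨x * y ^ (σ g : ℤ), g * g'⟩⟩ := by
  ext : 1
  · simp only [SemidirectProduct.mul_left, affineAction_apply, Prod.mk_mul_mk, mul_assoc]
  · rfl

lemma torusAction_mul_mk (a b c d : A) (n m : Multiplicative ℤ) (g g' : G) :
    (⟨(a, b), (n, g)⟩ * ⟨(c, d), (m, g')⟩ : (A × A) ⋊[torusAction σ] (Multiplicative ℤ × G)) =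
      ⟨(a * c ^ (σ g : ℤ), b * (c ^ toAdd n * d) ^ (σ g : ℤ)), (n * m, g * g')⟩ := by
  ext <;> simp [torusAction_apply]

def affineTorusEquiv :
    (A × Multiplicative ℤ) ⋊[affineAction σ] (A ⋊[(zpowUnitsHom A).comp σ] G) ≃*
      (A × A) ⋊[torusAction σ] (Multiplicative ℤ × G) where
  toFun h := ⟨(h.right.left, h.left.1 / h.right.left ^ toAdd h.left.2), (h.left.2⁻¹, h.right.right)⟩
  invFun k := ⟨(k.left.2 * k.left.1 ^ toAdd k.right.1⁻¹, k.right.1⁻¹), ⟨k.left.1, k.right.2⟩⟩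
  left_inv h := by ext <;> simp
  right_inv k := by ext <;> simp
  map_mul' h h' := by
    obtain ⟨⟨s, n⟩, x, g⟩ := h
    obtain ⟨⟨t, m⟩, y, g'⟩ := h'
    rw [affineAction_mul_mk, torusAction_mul_mk]
    ext
    · rfl
    · apply Additive.ofMul.injective
      simp only [ofMul_mul, ofMul_div, ofMul_zpow, toAdd_mul, toAdd_inv]
      module
    · exact mul_inv n m
    · rfl

end Actions

def negOnePowHom : Multiplicative (ZMod 2) →* ℤˣ where
  toFun ε := (-1 : ℤˣ) ^ ε.toAdd
  map_one' := uzpow_zero _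
  map_mul' ε δ := uzpow_add _ ε.toAdd δ.toAdd

lemma coe_negOnePowHom_ofAdd (ε : ZMod 2) : (negOnePowHom (ofAdd ε) : ℤ) = (-1) ^ ε.val := by
  change (((-1 : ℤˣ) ^ ε.val : ℤˣ) : ℤ) = _
  simp

/-- Let `P = S¹ ⋊ ℤ/2` (with `ℤ/2` acting on `S¹` by negation, i.e. `ε` acting by
`s ↦ (-1)^ε • s`). The formula `(x,ε)·(s,n) := ((-1)^ε s + n•x, n)` (written here
multiplicatively as `(s,n) ↦ (s^((-1)^ε) * x^n, n)`) defines an action of `P` on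
`A = S¹ × ℤ` by group automorphisms, i.e. a group homomorphism `P → Aut(A)`, and the
resulting semidirect product `H = A ⋊ P = (S¹ × ℤ) ⋊ (S¹ ⋊ ℤ/2)` is isomorphic as a group
to the semidirect product `(ℝ/ℤ)² ⋊ (ℤ × ℤ/2ℤ)`, where `(n,ε)` acts on the torus via the
matrix `[[1,0],[n,1]]·(-1)^ε`, i.e. by `(a,b) ↦ ((-1)^ε a, (-1)^ε (n•a + b))`. -/
theorem stmt4 :
    ∃ φP : Multiplicative (ZMod 2) →* MulAut S1,
      (∀ (ε : ZMod 2) (s : S1), φP (Multiplicative.ofAdd ε) s = s ^ ((-1 : ℤ) ^ ε.val)) ∧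
      ∃ φH : SemidirectProduct S1 (Multiplicative (ZMod 2)) φP →*
          MulAut (S1 × Multiplicative ℤ),
        (∀ (x : S1) (ε : ZMod 2) (s : S1) (n : ℤ),
            φH ⟨x, Multiplicative.ofAdd ε⟩ (s, Multiplicative.ofAdd n) =
              (s ^ ((-1 : ℤ) ^ ε.val) * x ^ n, Multiplicative.ofAdd n)) ∧
        ∃ ψ : Multiplicative ℤ × Multiplicative (ZMod 2) →* MulAut (S1 × S1),
          (∀ (n : ℤ) (ε : ZMod 2) (a b : S1),
              ψ (Multiplicative.ofAdd n, Multiplicative.ofAdd ε) (a, b) =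
                (a ^ ((-1 : ℤ) ^ ε.val), (a ^ n * b) ^ ((-1 : ℤ) ^ ε.val))) ∧
          Nonempty
            (SemidirectProduct (S1 × Multiplicative ℤ)
                (SemidirectProduct S1 (Multiplicative (ZMod 2)) φP) φH ≃*
              SemidirectProduct (S1 × S1) (Multiplicative ℤ × Multiplicative (ZMod 2)) ψ) := by
  refine ⟨(zpowUnitsHom S1).comp negOnePowHom, fun ε s => ?_, affineAction negOnePowHom,
    fun x ε s n => ?_, torusAction negOnePowHom, fun n ε a b => ?_,
    ⟨affineTorusEquiv negOnePowHom⟩⟩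
  · rw [MonoidHom.comp_apply, zpowUnitsHom_apply, coe_negOnePowHom_ofAdd]
  · rw [affineAction_apply, coe_negOnePowHom_ofAdd, toAdd_ofAdd]
  · rw [torusAction_apply, coe_negOnePowHom_ofAdd, toAdd_ofAdd]
end
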